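/- For 0 < ζ < 1 and any ξ ∈ ℝ, the quadratic form of the Robin harmonic oscillator decomposes as q_{ζ,ξ}(u) = (1 − ζ²)·[∫_0^∞ |u'|² dτ − |u(0)|²] + ζ²·[∫_0^∞ (|u'|² + (τ − ζ^{-1}ξ)²|u|²) dτ − |u(0)|²] for every admissible u; consequently, if μ(A) denotes the lowest eigenvalue of −d²/dτ² + (τ − A)² with Robin condition u'(0) = −u(0), then the lowest eigenvalue of −d²/dτ² + (ζτ − ξ)² with the same boundary condition is at least −(1 − ζ²) + ζ²·μ(ζ^{-1}ξ). -/

import Mathlib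

open MeasureTheory

lemma sub_inv_mul_sq_eq {ζ : ℝ} (hζ : ζ ≠ 0) (ξ τ : ℝ) :
    (τ - ζ⁻¹ * ξ) ^ 2 = ζ⁻¹ ^ 2 * (ζ * τ - ξ) ^ 2 := by
  field_simp

/-- Since `ζτ - ξ = ζ (τ - ζ⁻¹ξ)`, the `ζ²`-share of the translated form carries the whole
potential, and the remaining `(1 - ζ²)`-share of the kinetic and boundary terms is left over. -/
lemma integral_sq_potential_sub_eq {ν : Measure ℝ} {ζ : ℝ} (hζ : ζ ≠ 0) (ξ c : ℝ)
    {f g : ℝ → ℝ} (hf : Integrable f ν)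
    (hg : Integrable (fun τ => (ζ * τ - ξ) ^ 2 * g τ) ν) :
    (∫ τ, (f τ + (ζ * τ - ξ) ^ 2 * g τ) ∂ν) - c
      = (1 - ζ ^ 2) * ((∫ τ, f τ ∂ν) - c)
        + ζ ^ 2 * ((∫ τ, (f τ + (τ - ζ⁻¹ * ξ) ^ 2 * g τ) ∂ν) - c) := by
  have htranslated : (∫ τ, (f τ + (τ - ζ⁻¹ * ξ) ^ 2 * g τ) ∂ν)
      = (∫ τ, f τ ∂ν) + ζ⁻¹ ^ 2 * ∫ τ, (ζ * τ - ξ) ^ 2 * g τ ∂ν := by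
    simp_rw [sub_inv_mul_sq_eq hζ ξ, mul_assoc]
    rw [integral_add hf (hg.const_mul _), integral_const_mul]
  rw [integral_add hf hg, htranslated]
  field_simp
  ring

theorem harm_robin_form_decomposition_general (ζ ξ : ℝ) (hζ : 0 < ζ) (hζ1 : ζ < 1)
    (μ : ℝ → ℝ) (u u' : ℝ → ℝ)
    (hu' : IntegrableOn (fun τ => (u' τ) ^ 2) (Set.Ioi 0))
    (hpot : IntegrableOn (fun τ => (ζ * τ - ξ) ^ 2 * (u τ) ^ 2) (Set.Ioi 0))
    (hRobin : (∫ τ in Set.Ioi (0 : ℝ), (u' τ) ^ 2) - (u 0) ^ 2 ≥ -1)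
    (hμ : (∫ τ in Set.Ioi (0 : ℝ), ((u' τ) ^ 2 + (τ - ζ⁻¹ * ξ) ^ 2 * (u τ) ^ 2))
            - (u 0) ^ 2 ≥ μ (ζ⁻¹ * ξ)) :
    ((∫ τ in Set.Ioi (0 : ℝ), ((u' τ) ^ 2 + (ζ * τ - ξ) ^ 2 * (u τ) ^ 2)) - (u 0) ^ 2
      = (1 - ζ ^ 2) * ((∫ τ in Set.Ioi (0 : ℝ), (u' τ) ^ 2) - (u 0) ^ 2)
        + ζ ^ 2 * ((∫ τ in Set.Ioi (0 : ℝ),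
            ((u' τ) ^ 2 + (τ - ζ⁻¹ * ξ) ^ 2 * (u τ) ^ 2)) - (u 0) ^ 2)) ∧
    (∫ τ in Set.Ioi (0 : ℝ), ((u' τ) ^ 2 + (ζ * τ - ξ) ^ 2 * (u τ) ^ 2)) - (u 0) ^ 2
      ≥ -(1 - ζ ^ 2) + ζ ^ 2 * μ (ζ⁻¹ * ξ) := by
  have hdec := integral_sq_potential_sub_eq hζ.ne' ξ ((u 0) ^ 2) hu' hpot
  refine ⟨hdec, ?_⟩
  have hweight : 0 ≤ 1 - ζ ^ 2 := by nlinarith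
  rw [hdec, ← mul_neg_one]
  exact add_le_add (mul_le_mul_of_nonneg_left hRobin hweight)
    (mul_le_mul_of_nonneg_left hμ (sq_nonneg ζ))

/-- For `0 < ζ < 1` and `ξ ∈ ℝ`, the quadratic form of the Robin harmonic oscillator
decomposes as
`q_{ζ,ξ}(u) = (1−ζ²)[∫|u'|² − |u(0)|²] + ζ²[∫(|u'|² + (τ−ζ⁻¹ξ)²|u|²) − |u(0)|²]`
for every admissible (normalized) `u`; consequently, if the translated oscillator form is
bounded below by `μ(ζ⁻¹ξ)` and the Robin form by `−1`, then
`q_{ζ,ξ}(u) ≥ −(1−ζ²) + ζ²·μ(ζ⁻¹ξ)`, i.e. the lowest eigenvalue of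
`−d²/dτ² + (ζτ−ξ)²` with `u'(0) = −u(0)` is at least `−(1−ζ²) + ζ²μ(ζ⁻¹ξ)`. -/
theorem harm_robin_form_decomposition (ζ ξ : ℝ) (hζ : 0 < ζ) (hζ1 : ζ < 1)
    (μ : ℝ → ℝ) (u u' : ℝ → ℝ)
    (hderiv : ∀ τ ∈ Set.Ici (0 : ℝ), HasDerivWithinAt u (u' τ) (Set.Ici 0) τ)
    (hu : IntegrableOn (fun τ => (u τ) ^ 2) (Set.Ioi 0))
    (hu' : IntegrableOn (fun τ => (u' τ) ^ 2) (Set.Ioi 0))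
    (hpot : IntegrableOn (fun τ => (ζ * τ - ξ) ^ 2 * (u τ) ^ 2) (Set.Ioi 0))
    (hnorm : (∫ τ in Set.Ioi (0 : ℝ), (u τ) ^ 2) = 1)
    (hRobin : (∫ τ in Set.Ioi (0 : ℝ), (u' τ) ^ 2) - (u 0) ^ 2 ≥ -1)
    (hμ : (∫ τ in Set.Ioi (0 : ℝ), ((u' τ) ^ 2 + (τ - ζ⁻¹ * ξ) ^ 2 * (u τ) ^ 2))
            - (u 0) ^ 2 ≥ μ (ζ⁻¹ * ξ)) :
    ((∫ τ in Set.Ioi (0 : ℝ), ((u' τ) ^ 2 + (ζ * τ - ξ) ^ 2 * (u τ) ^ 2)) - (u 0) ^ 2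
      = (1 - ζ ^ 2) * ((∫ τ in Set.Ioi (0 : ℝ), (u' τ) ^ 2) - (u 0) ^ 2)
        + ζ ^ 2 * ((∫ τ in Set.Ioi (0 : ℝ),
            ((u' τ) ^ 2 + (τ - ζ⁻¹ * ξ) ^ 2 * (u τ) ^ 2)) - (u 0) ^ 2)) ∧
    (∫ τ in Set.Ioi (0 : ℝ), ((u' τ) ^ 2 + (ζ * τ - ξ) ^ 2 * (u τ) ^ 2)) - (u 0) ^ 2
      ≥ -(1 - ζ ^ 2) + ζ ^ 2 * μ (ζ⁻¹ * ξ) :=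
  harm_robin_form_decomposition_general ζ ξ hζ hζ1 μ u u' hu' hpot hRobin hμ
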